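/- (Acyclicity of the bridge matching.) Let S be a finite linearly ordered set of monomials. Define A to be the set of directed edges (σ, σ \ {sb(σ)}) over all σ ⊆ S having a bridge, subject to: whenever two distinct such σ, σ' satisfy σ \ {sb(σ)} = σ' \ {sb(σ')}, only the edge with the smaller sb is kept. Then the resulting directed graph G^A (the face poset graph with edges in A reversed) contains no directed cycle. -/

import Mathlib

namespace BarileMacchia

variable {N : ℕ} {M : Type*}

/-- The lcm (pointwise max of exponent vectors) of a finite set of monomials. -/
def lcmF (mon : M → Fin N → ℕ) (σ : Finset M) : Fin N → ℕ :=
  fun i => σ.sup fun m => mon m i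

/-- `m` is a bridge of `σ`: `m ∈ σ` and removing it does not change the lcm. -/
def IsBridge [DecidableEq M] (mon : M → Fin N → ℕ) (σ : Finset M) (m : M) : Prop :=
  m ∈ σ ∧ lcmF mon (σ.erase m) = lcmF mon σ

/-- `m` is a gap of `σ`: `m ∉ σ` and adding it does not change the lcm. -/
def IsGap [DecidableEq M] (mon : M → Fin N → ℕ) (σ : Finset M) (m : M) : Prop :=
  m ∉ σ ∧ lcmF mon (insert m σ) = lcmF mon σ

/-- A gap `m` of `σ` is a true gap if every bridge of `σ ∪ {m}` dominated by `m`
is already a bridge of `σ`. -/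
def IsTrueGap [LinearOrder M] (mon : M → Fin N → ℕ) (σ : Finset M) (m : M) : Prop :=
  IsGap mon σ m ∧ ∀ m', IsBridge mon (insert m σ) m' → m > m' → IsBridge mon σ m'

/-- `m` is the smallest bridge of `σ` (with respect to the linear order on `M`). -/
def IsSmallestBridge [LinearOrder M] (mon : M → Fin N → ℕ) (σ : Finset M) (m : M) : Prop :=
  IsBridge mon σ m ∧ ∀ m', IsBridge mon σ m' → m ≤ m'

/-- The bridge matching produced by Algorithm 2.4: each subset `σ` having a bridge is matched
with `σ \ {sb(σ)}`, and among distinct sources with the same target only the one with the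
strictly smallest smallest-bridge is kept. -/
def BMmatching [LinearOrder M] (mon : M → Fin N → ℕ) : Set (Finset M × Finset M) :=
  {e | ∃ s, IsSmallestBridge mon e.1 s ∧ e.2 = e.1.erase s ∧
    ∀ σ' s', IsSmallestBridge mon σ' s' → σ'.erase s' = e.2 → σ' ≠ e.1 → s < s'}

section Aux

set_option linter.unusedSectionVars false

variable [LinearOrder M] {mon : M → Fin N → ℕ}

lemma lcmF_mono {σ τ : Finset M} (h : σ ⊆ τ) : lcmF mon σ ≤ lcmF mon τ :=
  fun _i => Finset.sup_mono h

lemma lcmF_erase_le (σ : Finset M) (m : M) : lcmF mon (σ.erase m) ≤ lcmF mon σ :=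
  lcmF_mono (Finset.erase_subset _ _)

lemma bridge_of_superset {σ τ : Finset M} {m : M} (hsub : σ ⊆ τ)
    (heq : lcmF mon σ = lcmF mon τ) (hb : IsBridge mon σ m) : IsBridge mon τ m := by
  refine ⟨hsub hb.1, le_antisymm (lcmF_erase_le _ _) ?_⟩
  calc lcmF mon τ = lcmF mon (σ.erase m) := by rw [hb.2, heq]
    _ ≤ lcmF mon (τ.erase m) := lcmF_mono (Finset.erase_subset_erase _ hsub)

lemma sb_unique {σ : Finset M} {s s' : M} (h : IsSmallestBridge mon σ s)
    (h' : IsSmallestBridge mon σ s') : s = s' :=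
  le_antisymm (h.2 _ h'.1) (h'.2 _ h.1)

lemma erase_right_comm' (s : Finset M) (a b : M) : (s.erase a).erase b = (s.erase b).erase a := by
  ext x
  simp only [Finset.mem_erase]
  tauto

lemma BM_spec {v w : Finset M} (h : (v, w) ∈ BMmatching mon) :
    ∃ s, IsSmallestBridge mon v s ∧ w = v.erase s := by
  obtain ⟨s, hs, hw, -⟩ := h
  exact ⟨s, hs, hw⟩

/-- The matching property: the target of an edge of the matching is never a source. -/
lemma not_source_of_target {a b c : Finset M}
    (hba : (b, a) ∈ BMmatching mon) (hac : (a, c) ∈ BMmatching mon) : False := by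
  obtain ⟨sb, hsb, ha, _tieb⟩ := hba
  obtain ⟨sa, hsa, hc, tiea⟩ := hac
  simp only at ha hc tiea
  replace hsb : IsSmallestBridge mon b sb := hsb
  replace hsa : IsSmallestBridge mon a sa := hsa
  have hsbb : sb ∈ b := hsb.1.1
  have hlab : lcmF mon a = lcmF mon b := by rw [ha]; exact hsb.1.2
  have hlca : lcmF mon c = lcmF mon a := by rw [hc]; exact hsa.1.2
  have hsaa : sa ∈ a := hsa.1.1
  have hsane : sa ≠ sb := by
    rw [ha] at hsaa; exact (Finset.mem_erase.1 hsaa).1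
  have hsab : sa ∈ b := by
    rw [ha] at hsaa; exact Finset.mem_of_mem_erase hsaa
  set σ' : Finset M := b.erase sa with hσ'
  have hcσ' : σ'.erase sb = c := by
    rw [hσ', erase_right_comm', ← ha, ← hc]
  have hlσ' : lcmF mon σ' = lcmF mon b := by
    refine le_antisymm (lcmF_erase_le _ _) ?_
    calc lcmF mon b = lcmF mon c := by rw [hlca, hlab]
      _ ≤ lcmF mon σ' := by rw [← hcσ']; exact lcmF_erase_le _ _
  have hsa_bridge_b : IsBridge mon b sa := ⟨hsab, hlσ'⟩
  have h1 : sb ≤ sa := hsb.2 _ hsa_bridge_b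
  have hsbσ' : sb ∈ σ' := Finset.mem_erase.2 ⟨fun h => hsane h.symm, hsbb⟩
  have hsb_bridge : IsBridge mon σ' sb := by
    refine ⟨hsbσ', ?_⟩
    rw [hcσ', hlca, hlab, hlσ']
  have hsb_small : IsSmallestBridge mon σ' sb := by
    refine ⟨hsb_bridge, fun x hx => ?_⟩
    exact hsb.2 _ (bridge_of_superset (Finset.erase_subset _ _) hlσ' hx)
  have hne : σ' ≠ a := by
    intro h
    have : sb ∈ a := h ▸ hsbσ'
    rw [ha] at this
    exact (Finset.mem_erase.1 this).1 rfl
  have h2 : sa < sb := tiea σ' sb hsb_small (by rw [hcσ', hc]) hne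
  exact absurd h1 (not_le.2 h2)

lemma target_unique {a b c : Finset M}
    (h : (b, a) ∈ BMmatching mon) (h' : (b, c) ∈ BMmatching mon) : a = c := by
  obtain ⟨s, hs, ha⟩ := BM_spec h
  obtain ⟨s', hs', hc⟩ := BM_spec h'
  rw [ha, hc, sb_unique hs hs']

open Finset.Colex in
lemma colex_erase_lt_erase {a : Finset M} {s m : M} (hs : s ∈ a) (hm : m ∈ a) (hlt : s < m) :
    toColex (a.erase m) < toColex (a.erase s) := by
  rw [toColex_lt_toColex]
  have hmes : m ∈ a.erase s := Finset.mem_erase.2 ⟨hlt.ne', hm⟩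
  constructor
  · intro h
    have : m ∈ a.erase m := h ▸ hmes
    exact Finset.notMem_erase m a this
  · intro x hx hx'
    refine ⟨m, hmes, Finset.notMem_erase _ _, ?_⟩
    have hxa : x ∈ a := Finset.mem_of_mem_erase hx
    have hxs : x = s := by
      by_contra hne
      exact hx' (Finset.mem_erase.2 ⟨hne, hxa⟩)
    rw [hxs]
    exact hlt.le

open scoped Classical in
/-- The potential function: a source of the matching is measured by its (colex) target,
with a tie-breaking bit distinguishing sources from non-sources. -/
noncomputable def phi (mon : M → Fin N → ℕ) (v : Finset M) : Colex (Finset M) ×ₗ Bool :=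
  if h : ∃ w, (v, w) ∈ BMmatching mon then toLex (toColex h.choose, false)
  else toLex (toColex v, true)

lemma phi_of_source {v w : Finset M} (h : (v, w) ∈ BMmatching mon) :
    phi mon v = toLex (toColex w, false) := by
  classical
  unfold phi
  rw [dif_pos ⟨w, h⟩]
  have := Exists.choose_spec (⟨w, h⟩ : ∃ w', (v, w') ∈ BMmatching mon)
  rw [target_unique this h]

lemma phi_of_not_source {v : Finset M} (h : ¬ ∃ w, (v, w) ∈ BMmatching mon) :
    phi mon v = toLex (toColex v, true) := by
  classical
  unfold phi
  rw [dif_neg h]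

lemma lex_lt_of_fst_lt {x y : Colex (Finset M) ×ₗ Bool} (h : (ofLex x).1 < (ofLex y).1) :
    x < y := by
  rw [← toLex_ofLex x, ← toLex_ofLex y, Prod.Lex.lt_iff]
  exact Or.inl h

lemma phi1_le (v : Finset M) : (ofLex (phi mon v)).1 ≤ toColex v := by
  by_cases h : ∃ w, (v, w) ∈ BMmatching mon
  · obtain ⟨w, hw⟩ := h
    obtain ⟨s, _hs, hwe⟩ := BM_spec hw
    rw [phi_of_source hw]
    simp only [ofLex_toLex]
    rw [hwe]
    exact Finset.Colex.toColex_le_toColex_of_subset (Finset.erase_subset _ _)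
  · rw [phi_of_not_source h]
    exact le_rfl

/-- The step relation of the graph `G^A`. -/
def Step (mon : M → Fin N → ℕ) (a b : Finset M) : Prop :=
  (b ⊆ a ∧ a.card = b.card + 1 ∧ (a, b) ∉ BMmatching mon) ∨ (b, a) ∈ BMmatching mon

lemma lcmF_le_of_step {a b : Finset M} (h : Step mon a b) : lcmF mon b ≤ lcmF mon a := by
  rcases h with ⟨hsub, -, -⟩ | hup
  · exact lcmF_mono hsub
  · obtain ⟨s, hs, hae⟩ := BM_spec hup
    rw [hae]
    exact le_of_eq hs.1.2.symm

lemma phi_lt_of_step {a b : Finset M} (hL : lcmF mon b = lcmF mon a) (h : Step mon a b) :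
    phi mon b < phi mon a := by
  classical
  rcases h with ⟨hsub, hcard, hnot⟩ | hup
  · -- downward step: b = a.erase m for some m ∈ a
    have hcard1 : (a \ b).card = 1 := by
      rw [Finset.card_sdiff_of_subset hsub, hcard]; omega
    obtain ⟨m, hm⟩ := Finset.card_eq_one.1 hcard1
    have hma : m ∈ a := by
      have : m ∈ a \ b := hm ▸ Finset.mem_singleton_self m
      exact (Finset.mem_sdiff.1 this).1
    have hb : b = a.erase m := by
      rw [Finset.erase_eq, ← hm, Finset.sdiff_sdiff_eq_self hsub]
    apply lex_lt_of_fst_lt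
    by_cases hA : ∃ w, (a, w) ∈ BMmatching mon
    · -- a is a source
      obtain ⟨w, hw⟩ := hA
      obtain ⟨s, hs, hwe⟩ := BM_spec hw
      rw [phi_of_source hw]
      simp only [ofLex_toLex]
      have hbne : b ≠ w := fun h => hnot (h ▸ hw)
      have hmne : m ≠ s := fun h => hbne (by rw [hb, hwe, h])
      have hbridge : IsBridge mon a m := ⟨hma, by rw [← hb]; exact hL⟩
      have hslt : s < m := lt_of_le_of_ne (hs.2 _ hbridge) (Ne.symm hmne)
      calc (ofLex (phi mon b)).1 ≤ toColex b := phi1_le b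
        _ < toColex (a.erase s) := by
            rw [hb]; exact colex_erase_lt_erase hs.1.1 hma hslt
        _ = toColex w := by rw [hwe]
    · -- a is not a source
      rw [phi_of_not_source hA]
      simp only [ofLex_toLex]
      calc (ofLex (phi mon b)).1 ≤ toColex b := phi1_le b
        _ < toColex a :=
            Finset.Colex.toColex_lt_toColex_of_ssubset (hb ▸ Finset.erase_ssubset hma)
  · -- upward step: (b, a) ∈ BMmatching
    have hnMSa : ¬ ∃ w, (a, w) ∈ BMmatching mon := by
      rintro ⟨c, hc⟩
      exact not_source_of_target hup hc
    rw [phi_of_source hup, phi_of_not_source hnMSa, Prod.Lex.lt_iff]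
    exact Or.inr ⟨rfl, by simp⟩

theorem statement14' (mon : M → Fin N → ℕ) :
    ∀ σ : Finset M, ¬ Relation.TransGen (Step mon) σ σ := by
  intro σ hcyc
  have hmonoT : ∀ a b : Finset M, Relation.TransGen (Step mon) a b →
      lcmF mon b ≤ lcmF mon a := by
    intro a b h
    induction h with
    | single h => exact lcmF_le_of_step h
    | tail _ h ih => exact (lcmF_le_of_step h).trans ih
  have key : ∀ a b : Finset M, Relation.TransGen (Step mon) a b →
      lcmF mon a ≤ lcmF mon b →
      Relation.TransGen (fun x y : Finset M => phi mon y < phi mon x) a b := by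
    intro a b h
    induction h with
    | single h =>
      intro hle
      exact Relation.TransGen.single
        (phi_lt_of_step (le_antisymm (lcmF_le_of_step h) hle) h)
    | @tail x y hax hxy ih =>
      intro hle
      have h1 : lcmF mon y ≤ lcmF mon x := lcmF_le_of_step hxy
      have h2 : lcmF mon x ≤ lcmF mon _ := hmonoT _ _ hax
      have hxy_eq : lcmF mon y = lcmF mon x := le_antisymm h1 (h2.trans hle)
      exact Relation.TransGen.tail (ih (hle.trans h1)) (phi_lt_of_step hxy_eq hxy)
  have hlt : ∀ a b : Finset M,
      Relation.TransGen (fun x y : Finset M => phi mon y < phi mon x) a b →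
      phi mon b < phi mon a := by
    intro a b h
    induction h with
    | single h => exact h
    | tail _ h ih => exact lt_trans h ih
  exact lt_irrefl _ (hlt σ σ (key σ σ hcyc le_rfl))

end Aux

/-- Theorem 2.6: the graph `G^A` associated to the bridge matching `A` (downward Taylor-complex
edges not in `A`, together with the reversals of the edges of `A`) has no directed cycle. -/
theorem statement14 [LinearOrder M] (mon : M → Fin N → ℕ) :
    ∀ σ : Finset M, ¬ Relation.TransGen
      (fun a b : Finset M =>
        (b ⊆ a ∧ a.card = b.card + 1 ∧ (a, b) ∉ BMmatching mon) ∨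
          (b, a) ∈ BMmatching mon) σ σ :=
  statement14' mon

end BarileMacchia
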